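/- Power transform variance inequality: Let (M,d) be a global NPC space, α ∈ [1,2], and P a Borel probability measure on M with ∫d(x,y)^α dP(y) < ∞ and with Fréchet mean x* for η = d^α. Set F_α(x) = ∫ d(x,y)^α dP(y) and, for x ≠ x*, b_α(x) = sup_{t∈(0,1]} [F_α(γ^x_t) − (t^{α/2}+(1−t)^{α/2})F_α(x*)] / [t^{α/2} d(x,x*)^α], where γ^x:[0,1]→M is the geodesic from x* to x. If b_α(x) > 0 then d(x,x*)^α ≤ (1/b_α(x)) ∫(d(x,y)^α − d(x*,y)^α)dP(y). Consequently, if B_α := inf_{x≠x*} b_α(x) > 0, then d(x,x*)^α ≤ (1/B_α) ∫(d(x,y)^α − d(x*,y)^α)dP(y) for all x ∈ M. -/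

import Mathlib

open MeasureTheory Set

/-- A Polish metric space is a (global) NPC space if midpoints satisfying the NPC
inequality always exist. -/
def IsNPC (M : Type*) [MetricSpace M] : Prop :=
  ∀ x₀ x₁ : M, ∃ y : M, ∀ z : M,
    dist z y ^ 2 ≤
      (1 / 2) * dist z x₀ ^ 2 + (1 / 2) * dist z x₁ ^ 2 - (1 / 4) * dist x₀ x₁ ^ 2

/-- A geodesic `γ : [0,1] → M` (as a map on `ℝ`, constrained on `[0,1]`). -/
def IsGeodesic {M : Type*} [MetricSpace M] (γ : ℝ → M) : Prop :=
  ∀ s ∈ Set.Icc (0 : ℝ) 1, ∀ t ∈ Set.Icc (0 : ℝ) 1,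
    dist (γ s) (γ t) = |s - t| * dist (γ 0) (γ 1)

/-- `F_α(x) = ∫ d(x,y)^α dP(y)`. -/
noncomputable def Falpha {M : Type*} [MetricSpace M] [MeasurableSpace M]
    (P : Measure M) (α : ℝ) (x : M) : ℝ :=
  ∫ y, dist x y ^ α ∂P

/-- `b_α(x)`, the supremum over `t ∈ (0,1]` along the geodesic `γˣ` from `x*` to `x`. -/
noncomputable def bAlpha {M : Type*} [MetricSpace M] [MeasurableSpace M]
    (P : Measure M) (α : ℝ) (xstar : M) (γ : M → ℝ → M) (x : M) : ℝ :=
  sSup {v : ℝ | ∃ t ∈ Set.Ioc (0 : ℝ) 1,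
    v = (Falpha P α (γ x t) - (t ^ (α / 2) + (1 - t) ^ (α / 2)) * Falpha P α xstar) /
      (t ^ (α / 2) * dist x xstar ^ α)}

/-!
Along a geodesic `γ` of an NPC space, `t ↦ d(z, γ t)²` is continuous and, by the NPC inequality
at midpoints, midpoint convex, hence convex. Since `α / 2 ≤ 1`, subadditivity of `r ↦ r ^ (α / 2)`
turns this into `d(z, γ t)^α ≤ (1 - t)^(α/2) d(z, x*)^α + t^(α/2) d(z, x)^α`, and integrating gives
`F_α(γ t) ≤ (1 - t)^(α/2) F_α(x*) + t^(α/2) F_α(x)`. So every quotient in the supremum defining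
`b_α(x)` is bounded by its value at `t = 1`, i.e. `b_α(x) = (F_α(x) - F_α(x*)) / d(x, x*)^α`, and
both inequalities reduce to this identity.
-/

/-- Extremal argument: at the leftmost maximum point `c` of `g`, the midpoint inequality for
`c - h, c + h` forces a contradiction unless the maximum is attained at an endpoint. -/
theorem nonpos_of_midpoint_le_of_continuousOn {g : ℝ → ℝ} {a b : ℝ}
    (hg : ContinuousOn g (Icc a b)) (ha : g a ≤ 0) (hb : g b ≤ 0)
    (hmid : ∀ s ∈ Icc a b, ∀ u ∈ Icc a b, g ((s + u) / 2) ≤ (g s + g u) / 2) :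
    ∀ t ∈ Icc a b, g t ≤ 0 := by
  intro t ht
  by_contra! hpos
  obtain ⟨c, hc, hmax⟩ := isCompact_Icc.exists_isMaxOn ⟨t, ht⟩ hg
  set S := Icc a b ∩ g ⁻¹' Ici (g c)
  have hS : IsCompact S :=
    isCompact_Icc.of_isClosed_subset (hg.preimage_isClosed_of_isClosed isClosed_Icc isClosed_Ici)
      inter_subset_left
  obtain ⟨⟨hac₀, hc₀b⟩, hc₀max⟩ := hS.sInf_mem ⟨c, hc, le_refl (g c)⟩
  set c₀ := sInf S
  have hgc₀ : 0 < g c₀ := (hpos.trans_le (hmax ht)).trans_le hc₀max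
  replace hac₀ : a < c₀ := hac₀.lt_of_ne fun h => by rw [h] at ha; linarith
  replace hc₀b : c₀ < b := hc₀b.lt_of_ne fun h => by rw [h] at hgc₀; linarith
  set h := min (c₀ - a) (b - c₀)
  have hh : 0 < h := lt_min (by linarith) (by linarith)
  have hl : c₀ - h ∈ Icc a b := ⟨by linarith [min_le_left (c₀ - a) (b - c₀)], by linarith⟩
  have hr : c₀ + h ∈ Icc a b := ⟨by linarith, by linarith [min_le_right (c₀ - a) (b - c₀)]⟩
  have hgl : g (c₀ - h) < g c := by
    refine lt_of_not_ge fun hge => ?_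
    linarith [csInf_le hS.bddBelow ⟨hl, hge⟩]
  have hmid₀ := hmid _ hl _ hr
  rw [show (c₀ - h + (c₀ + h)) / 2 = c₀ by ring] at hmid₀
  linarith [show g (c₀ + h) ≤ g c from hmax hr, show g c ≤ g c₀ from hc₀max]

/-- In an NPC space metric midpoints are unique: the NPC inequality at `z = m` forces `m` to be
the point provided by `IsNPC`. -/
theorem IsNPC.dist_sq_le_of_dist_eq_half {M : Type*} [MetricSpace M] (hM : IsNPC M) {p q m : M}
    (hp : dist m p = dist p q / 2) (hq : dist m q = dist p q / 2) (z : M) :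
    dist z m ^ 2 ≤ 1 / 2 * dist z p ^ 2 + 1 / 2 * dist z q ^ 2 - 1 / 4 * dist p q ^ 2 := by
  obtain ⟨y, hy⟩ := hM p q
  have hmy : dist m y = 0 := by
    have hm := hy m
    rw [hp, hq] at hm
    nlinarith [dist_nonneg (x := m) (y := y)]
  rw [dist_eq_zero.1 hmy]
  exact hy z

theorem Real.rpow_le_of_sq_le_mul_add_mul {a b c t p : ℝ} (ha : 0 ≤ a) (hb : 0 ≤ b) (hc : 0 ≤ c)
    (ht₀ : 0 ≤ t) (ht₁ : t ≤ 1) (hp₀ : 0 ≤ p) (hp₂ : p ≤ 2)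
    (h : c ^ 2 ≤ (1 - t) * a ^ 2 + t * b ^ 2) :
    c ^ p ≤ (1 - t) ^ (p / 2) * a ^ p + t ^ (p / 2) * b ^ p := by
  have hsq : ∀ x : ℝ, 0 ≤ x → (x ^ 2) ^ (p / 2) = x ^ p := fun x hx => by
    rw [← Real.rpow_natCast, ← Real.rpow_mul hx, Nat.cast_ofNat, mul_div_cancel₀ p two_ne_zero]
  calc c ^ p = (c ^ 2) ^ (p / 2) := (hsq c hc).symm
    _ ≤ ((1 - t) * a ^ 2 + t * b ^ 2) ^ (p / 2) := by gcongr
    _ ≤ ((1 - t) * a ^ 2) ^ (p / 2) + (t * b ^ 2) ^ (p / 2) :=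
      Real.rpow_add_le_add_rpow (by nlinarith) (by positivity) (by linarith) (by linarith)
    _ = (1 - t) ^ (p / 2) * a ^ p + t ^ (p / 2) * b ^ p := by
      rw [Real.mul_rpow (by linarith) (sq_nonneg a), Real.mul_rpow ht₀ (sq_nonneg b), hsq a ha,
        hsq b hb]

namespace IsGeodesic

variable {M : Type*} [MetricSpace M] {γ : ℝ → M}

theorem continuousOn (hγ : IsGeodesic γ) : ContinuousOn γ (Icc 0 1) :=
  LipschitzOnWith.continuousOn (K := (dist (γ 0) (γ 1)).toNNReal) <|
    LipschitzOnWith.of_dist_le_mul fun s hs t ht => by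
      rw [hγ s hs t ht, Real.coe_toNNReal _ dist_nonneg, Real.dist_eq, mul_comm]

theorem dist_midpoint_left (hγ : IsGeodesic γ) {s u : ℝ} (hs : s ∈ Icc (0 : ℝ) 1)
    (hu : u ∈ Icc (0 : ℝ) 1) : dist (γ ((s + u) / 2)) (γ s) = dist (γ s) (γ u) / 2 := by
  have hm : (s + u) / 2 ∈ Icc (0 : ℝ) 1 := ⟨by linarith [hs.1, hu.1], by linarith [hs.2, hu.2]⟩
  rw [hγ _ hm _ hs, hγ _ hs _ hu, show (s + u) / 2 - s = -(s - u) / 2 by ring, abs_div, abs_neg,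
    abs_two]
  ring

theorem dist_midpoint_right (hγ : IsGeodesic γ) {s u : ℝ} (hs : s ∈ Icc (0 : ℝ) 1)
    (hu : u ∈ Icc (0 : ℝ) 1) : dist (γ ((s + u) / 2)) (γ u) = dist (γ s) (γ u) / 2 := by
  have hm : (s + u) / 2 ∈ Icc (0 : ℝ) 1 := ⟨by linarith [hs.1, hu.1], by linarith [hs.2, hu.2]⟩
  rw [hγ _ hm _ hu, hγ _ hs _ hu, show (s + u) / 2 - u = (s - u) / 2 by ring, abs_div, abs_two]
  ring

theorem dist_sq_le (hM : IsNPC M) (hγ : IsGeodesic γ) {t : ℝ} (ht : t ∈ Icc (0 : ℝ) 1) (z : M) :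
    dist z (γ t) ^ 2 ≤ (1 - t) * dist z (γ 0) ^ 2 + t * dist z (γ 1) ^ 2 := by
  have hcont := hγ.continuousOn
  have hg := nonpos_of_midpoint_le_of_continuousOn
    (g := fun t => dist z (γ t) ^ 2 - ((1 - t) * dist z (γ 0) ^ 2 + t * dist z (γ 1) ^ 2))
    (by fun_prop) (by simp) (by simp) ?_ t ht
  · simpa only [sub_nonpos] using hg
  intro s hs u hu
  have hnpc := hM.dist_sq_le_of_dist_eq_half (hγ.dist_midpoint_left hs hu)
    (hγ.dist_midpoint_right hs hu) z
  nlinarith [sq_nonneg (dist (γ s) (γ u))]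

theorem dist_rpow_le (hM : IsNPC M) (hγ : IsGeodesic γ) {p t : ℝ} (hp₀ : 0 ≤ p) (hp₂ : p ≤ 2)
    (ht : t ∈ Icc (0 : ℝ) 1) (z : M) :
    dist z (γ t) ^ p ≤ (1 - t) ^ (p / 2) * dist z (γ 0) ^ p + t ^ (p / 2) * dist z (γ 1) ^ p :=
  Real.rpow_le_of_sq_le_mul_add_mul dist_nonneg dist_nonneg dist_nonneg ht.1 ht.2 hp₀ hp₂
    (hγ.dist_sq_le hM ht z)

theorem Falpha_le [MeasurableSpace M] (hM : IsNPC M) (hγ : IsGeodesic γ) {P : Measure M}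
    {p t : ℝ} (hp₀ : 0 ≤ p) (hp₂ : p ≤ 2) (ht : t ∈ Icc (0 : ℝ) 1)
    (hP₀ : Integrable (fun y => dist (γ 0) y ^ p) P)
    (hP₁ : Integrable (fun y => dist (γ 1) y ^ p) P) :
    Falpha P p (γ t) ≤ (1 - t) ^ (p / 2) * Falpha P p (γ 0) + t ^ (p / 2) * Falpha P p (γ 1) := by
  have hle : ∀ y, dist (γ t) y ^ p ≤
      (1 - t) ^ (p / 2) * dist (γ 0) y ^ p + t ^ (p / 2) * dist (γ 1) y ^ p := fun y => by
    simpa only [dist_comm y] using hγ.dist_rpow_le hM hp₀ hp₂ ht y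
  calc Falpha P p (γ t)
      ≤ ∫ y, ((1 - t) ^ (p / 2) * dist (γ 0) y ^ p + t ^ (p / 2) * dist (γ 1) y ^ p) ∂P :=
        integral_mono_of_nonneg (.of_forall fun y => Real.rpow_nonneg dist_nonneg p)
          ((hP₀.const_mul _).add (hP₁.const_mul _)) (.of_forall hle)
    _ = (1 - t) ^ (p / 2) * Falpha P p (γ 0) + t ^ (p / 2) * Falpha P p (γ 1) := by
        rw [integral_add (hP₀.const_mul _) (hP₁.const_mul _), integral_const_mul,
          integral_const_mul, Falpha, Falpha]

end IsGeodesic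

theorem bAlpha_eq_of_ne {M : Type*} [MetricSpace M] [MeasurableSpace M] (hM : IsNPC M)
    {α : ℝ} (hα₀ : 0 < α) (hα₂ : α ≤ 2) {P : Measure M} {xstar x : M} {γ : M → ℝ → M}
    (hPx : Integrable (fun y => dist x y ^ α) P)
    (hPxstar : Integrable (fun y => dist xstar y ^ α) P)
    (hγ : IsGeodesic (γ x)) (hγ₀ : γ x 0 = xstar) (hγ₁ : γ x 1 = x) (hx : x ≠ xstar) :
    bAlpha P α xstar γ x = (Falpha P α x - Falpha P α xstar) / dist x xstar ^ α := by
  have hD : 0 < dist x xstar ^ α := Real.rpow_pos_of_pos (dist_pos.2 hx) α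
  refine IsGreatest.csSup_eq ⟨⟨1, ⟨one_pos, le_rfl⟩, ?_⟩, ?_⟩
  · rw [hγ₁, Real.one_rpow, sub_self, Real.zero_rpow (by positivity), one_mul, add_zero, one_mul]
  rintro v ⟨t, ht, rfl⟩
  have hF := hγ.Falpha_le hM hα₀.le hα₂ ⟨ht.1.le, ht.2⟩ (by rwa [hγ₀]) (by rwa [hγ₁])
  rw [hγ₀, hγ₁] at hF
  have htp : 0 < t ^ (α / 2) := Real.rpow_pos_of_pos ht.1 _
  rw [div_le_div_iff₀ (by positivity) hD]
  nlinarith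

theorem stmt_3_general
    {M : Type*} [MetricSpace M] [MeasurableSpace M]
    (hM : IsNPC M)
    (α : ℝ) (hα : α ∈ Set.Icc (1 : ℝ) 2)
    (P : Measure M)
    (hPα : ∀ x : M, Integrable (fun y => dist x y ^ α) P)
    (xstar : M)
    -- x* is a Fréchet mean for η = dᵅ
    (hmean : ∀ x : M, Falpha P α xstar ≤ Falpha P α x)
    -- γ x is the geodesic from x* to x
    (γ : M → ℝ → M)
    (hγ : ∀ x : M, IsGeodesic (γ x) ∧ γ x 0 = xstar ∧ γ x 1 = x) :
    (∀ x : M, x ≠ xstar → 0 < bAlpha P α xstar γ x →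
      dist x xstar ^ α ≤
        (1 / bAlpha P α xstar γ x) * ∫ y, (dist x y ^ α - dist xstar y ^ α) ∂P) ∧
    (0 < sInf {b : ℝ | ∃ x : M, x ≠ xstar ∧ b = bAlpha P α xstar γ x} →
      ∀ x : M,
        dist x xstar ^ α ≤
          (1 / sInf {b : ℝ | ∃ x : M, x ≠ xstar ∧ b = bAlpha P α xstar γ x}) *
            ∫ y, (dist x y ^ α - dist xstar y ^ α) ∂P) := by
  have hα₀ : 0 < α := by linarith [hα.1]
  have hb : ∀ x, x ≠ xstar →
      bAlpha P α xstar γ x = (Falpha P α x - Falpha P α xstar) / dist x xstar ^ α :=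
    fun x hx => bAlpha_eq_of_ne hM hα₀ hα.2 (hPα x) (hPα xstar) (hγ x).1 (hγ x).2.1 (hγ x).2.2 hx
  have hbound : ∀ x, x ≠ xstar → ∀ B, 0 < B → B ≤ bAlpha P α xstar γ x →
      dist x xstar ^ α ≤ 1 / B * ∫ y, (dist x y ^ α - dist xstar y ^ α) ∂P := by
    intro x hx B hB hBx
    rw [hb x hx, le_div_iff₀ (Real.rpow_pos_of_pos (dist_pos.2 hx) α)] at hBx
    rw [integral_sub (hPα x) (hPα xstar), one_div, ← div_eq_inv_mul, le_div_iff₀ hB, mul_comm]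
    exact hBx
  refine ⟨fun x hx hbx => hbound x hx _ hbx le_rfl, fun hB x => ?_⟩
  obtain rfl | hx := eq_or_ne x xstar
  · simp [Real.zero_rpow hα₀.ne']
  refine hbound x hx _ hB (csInf_le ⟨0, ?_⟩ ⟨x, hx, rfl⟩)
  rintro _ ⟨x', hx', rfl⟩
  rw [hb x' hx']
  exact div_nonneg (sub_nonneg.2 (hmean x')) (Real.rpow_nonneg dist_nonneg α)

/-- Power transform variance inequality. -/
theorem stmt_3
    {M : Type*} [MetricSpace M] [CompleteSpace M] [TopologicalSpace.SeparableSpace M]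
    [MeasurableSpace M] [BorelSpace M]
    (hM : IsNPC M)
    (α : ℝ) (hα : α ∈ Set.Icc (1 : ℝ) 2)
    (P : Measure M) [IsProbabilityMeasure P]
    (hPα : ∀ x : M, Integrable (fun y => dist x y ^ α) P)
    (xstar : M)
    -- x* is a Fréchet mean for η = dᵅ
    (hmean : ∀ x : M, Falpha P α xstar ≤ Falpha P α x)
    -- γ x is the geodesic from x* to x
    (γ : M → ℝ → M)
    (hγ : ∀ x : M, IsGeodesic (γ x) ∧ γ x 0 = xstar ∧ γ x 1 = x) :
    (∀ x : M, x ≠ xstar → 0 < bAlpha P α xstar γ x →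
      dist x xstar ^ α ≤
        (1 / bAlpha P α xstar γ x) * ∫ y, (dist x y ^ α - dist xstar y ^ α) ∂P) ∧
    (0 < sInf {b : ℝ | ∃ x : M, x ≠ xstar ∧ b = bAlpha P α xstar γ x} →
      ∀ x : M,
        dist x xstar ^ α ≤
          (1 / sInf {b : ℝ | ∃ x : M, x ≠ xstar ∧ b = bAlpha P α xstar γ x}) *
            ∫ y, (dist x y ^ α - dist xstar y ^ α) ∂P) :=
  stmt_3_general hM α hα P hPα xstar hmean γ hγ
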